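/- arXiv:1204.2723 — 5 statements merged into one kernel-verified Lean document; each statement's English description precedes it below -/
import Mathlib

section
/- Let u ∈ C([0,1]) be the piecewise linear function u(t) = max(0, 2t − 1). Then 𝔅̄₂u(1/4) = 1/π − 1/4. In particular, since B₂u(1/4) = 1/16 and S_{Δ₂}u = u, one has (𝔅̄₂ ∘ S_{Δ₂})u(1/4) ≠ B₂u(1/4), so the operator 𝔅̄₂ ∘ S_{Δ₂} is not equal to the Bernstein operator B₂. -/
open MeasureTheory Finset

/-- The Beta operator of Mühlbach and Lupaş on `C[0,1]`. -/
noncomputable def betaOp (n : ℕ) (f : ℝ → ℝ) (x : ℝ) : ℝ :=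
  if x = 0 then f 0
  else if x = 1 then f 1
  else (∫ t in (0:ℝ)..1, t ^ ((n:ℝ) * x - 1) * (1 - t) ^ ((n:ℝ) * (1 - x) - 1) * f t) /
       (∫ t in (0:ℝ)..1, t ^ ((n:ℝ) * x - 1) * (1 - t) ^ ((n:ℝ) * (1 - x) - 1))

/-- The Bernstein operator. -/
noncomputable def bernsteinOp (n : ℕ) (f : ℝ → ℝ) (x : ℝ) : ℝ :=
  ∑ k ∈ Finset.range (n + 1), f ((k : ℝ) / n) * (n.choose k) * x ^ k * (1 - x) ^ (n - k)

/-- The hat function `u_{n,i}` of the piecewise linear interpolation at the nodes `j/n`. -/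
noncomputable def hatFn (n i : ℕ) (x : ℝ) : ℝ := max 0 (1 - |(n : ℝ) * x - i|)

/-- Piecewise linear interpolation at the nodes `0, 1/n, …, 1`. -/
noncomputable def piecewiseLinOp (n : ℕ) (f : ℝ → ℝ) (x : ℝ) : ℝ :=
  ∑ i ∈ Finset.range (n + 1), f ((i : ℝ) / n) * hatFn n i x

/-!
At `n = 2`, `x = 1/4` the Beta kernel is `w(t) = t^(-1/2) (1-t)^(1/2) = (1-t)/√(t(1-t))`.
Both `w` and `w(t)(2t-1)` have elementary antiderivatives in `√(t(1-t))` and `arcsin(2t-1)`,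
which give `∫₀¹ w = π/2` and `∫₀¹ w u = ∫_{1/2}^1 w(t)(2t-1) dt = 1/2 - π/8`, hence
`𝔅̄₂u(1/4) = 1/π - 1/4`. Since `S_{Δ₂}u = u` on `[0,1]` and `B₂u(1/4) = 1/16`, the equality
`𝔅̄₂(S_{Δ₂}u)(1/4) = B₂u(1/4)` would force `π = 16/5`.
-/

open Real intervalIntegral

noncomputable def betaKernel (n : ℕ) (x t : ℝ) : ℝ :=
  t ^ ((n : ℝ) * x - 1) * (1 - t) ^ ((n : ℝ) * (1 - x) - 1)

lemma betaOp_eq_div {n : ℕ} {f : ℝ → ℝ} {x : ℝ} (h0 : x ≠ 0) (h1 : x ≠ 1) :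
    betaOp n f x =
      (∫ t in (0 : ℝ)..1, betaKernel n x t * f t) / ∫ t in (0 : ℝ)..1, betaKernel n x t := by
  rw [betaOp, if_neg h0, if_neg h1]
  rfl

lemma betaOp_congr {n : ℕ} {f g : ℝ → ℝ} (hfg : Set.EqOn f g (Set.Icc 0 1)) (x : ℝ) :
    betaOp n f x = betaOp n g x := by
  have hI : Set.EqOn (fun t => betaKernel n x t * f t) (fun t => betaKernel n x t * g t)
      (Set.uIcc 0 1) := by
    intro t ht
    rw [Set.uIcc_of_le zero_le_one] at ht
    simp only [hfg ht]
  unfold betaOp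
  split_ifs
  · exact hfg (Set.left_mem_Icc.2 zero_le_one)
  · exact hfg (Set.right_mem_Icc.2 zero_le_one)
  · exact congrArg (· / _) (integral_congr hI)

lemma intervalIntegrable_betaKernel {n : ℕ} {x : ℝ} (hx : 0 < n * x) (hx' : 1 ≤ n * (1 - x)) :
    IntervalIntegrable (betaKernel n x) volume 0 1 :=
  (intervalIntegrable_rpow' (by linarith)).mul_continuousOn <|
    ((continuous_const.sub continuous_id).rpow_const fun _ => Or.inr (by linarith)).continuousOn

lemma betaKernel_two_quarter {t : ℝ} (h0 : 0 < t) (h1 : t < 1) :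
    betaKernel 2 (1 / 4) t = (1 - t) / √(t * (1 - t)) := by
  have hs : 0 < √(1 - t) := sqrt_pos.2 (by linarith)
  rw [betaKernel, show (2 : ℕ) * (1 / 4 : ℝ) - 1 = -(1 / 2) by norm_num,
    show (2 : ℕ) * (1 - 1 / 4 : ℝ) - 1 = 1 / 2 by norm_num, rpow_neg h0.le, ← sqrt_eq_rpow,
    ← sqrt_eq_rpow, sqrt_mul h0.le]
  field_simp
  rw [sq_sqrt (by linarith)]

lemma hasDerivAt_arcsin_two_mul_sub_one {t : ℝ} (h0 : 0 < t) (h1 : t < 1) :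
    HasDerivAt (fun s => arcsin (2 * s - 1)) (1 / √(t * (1 - t))) t := by
  have hlin : HasDerivAt (fun s : ℝ => 2 * s - 1) 2 t := by
    simpa using ((hasDerivAt_id t).const_mul 2).sub_const 1
  have hroot : √(1 - (2 * t - 1) ^ 2) = 2 * √(t * (1 - t)) := by
    rw [show 1 - (2 * t - 1) ^ 2 = 2 ^ 2 * (t * (1 - t)) by ring, sqrt_mul (by norm_num),
      sqrt_sq (by norm_num)]
  have hpos : 0 < √(t * (1 - t)) := sqrt_pos.2 (by nlinarith)
  refine ((hasDerivAt_arcsin (by linarith) (by linarith)).comp t hlin).congr_deriv ?_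
  rw [hroot]
  field_simp

lemma hasDerivAt_sqrt_mul_one_sub {t : ℝ} (h0 : 0 < t) (h1 : t < 1) :
    HasDerivAt (fun s => √(s * (1 - s))) ((1 - 2 * t) / (2 * √(t * (1 - t)))) t := by
  have hp : HasDerivAt (fun s : ℝ => s * (1 - s)) (1 - 2 * t) t :=
    ((hasDerivAt_id' t).mul ((hasDerivAt_id' t).const_sub 1)).congr_deriv (by ring)
  exact hp.sqrt (by nlinarith)

section Antiderivatives

variable {a b : ℝ}

lemma intervalIntegrable_betaKernel_two_quarter_mul {g : ℝ → ℝ} (hg : Continuous g) (ha : 0 ≤ a)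
    (hab : a ≤ b) (hb : b ≤ 1) :
    IntervalIntegrable (fun t => betaKernel 2 (1 / 4) t * g t) volume a b :=
  ((intervalIntegrable_betaKernel (by norm_num) (by norm_num)).mul_continuousOn
    hg.continuousOn).mono_set <| by
      rw [Set.uIcc_of_le hab, Set.uIcc_of_le zero_le_one]
      exact Set.Icc_subset_Icc ha hb

lemma integral_betaKernel_two_quarter (ha : 0 ≤ a) (hab : a ≤ b) (hb : b ≤ 1) :
    ∫ t in a..b, betaKernel 2 (1 / 4) t =
      (arcsin (2 * b - 1) / 2 + √(b * (1 - b))) -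
        (arcsin (2 * a - 1) / 2 + √(a * (1 - a))) := by
  refine integral_eq_sub_of_hasDerivAt_of_le
    (f := fun t => arcsin (2 * t - 1) / 2 + √(t * (1 - t))) hab (by fun_prop) (fun t ht => ?_) ?_
  · have h0 : 0 < t := ha.trans_lt ht.1
    have h1 : t < 1 := ht.2.trans_le hb
    have hs : 0 < √(t * (1 - t)) := sqrt_pos.2 (by nlinarith)
    refine (((hasDerivAt_arcsin_two_mul_sub_one h0 h1).div_const 2).add
      (hasDerivAt_sqrt_mul_one_sub h0 h1)).congr_deriv ?_
    rw [betaKernel_two_quarter h0 h1]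
    field_simp
    ring
  · simpa using
      intervalIntegrable_betaKernel_two_quarter_mul (g := fun _ => 1) continuous_const ha hab hb

lemma integral_betaKernel_two_quarter_mul (ha : 0 ≤ a) (hab : a ≤ b) (hb : b ≤ 1) :
    ∫ t in a..b, betaKernel 2 (1 / 4) t * (2 * t - 1) =
      ((b - 3 / 2) * √(b * (1 - b)) - arcsin (2 * b - 1) / 4) -
        ((a - 3 / 2) * √(a * (1 - a)) - arcsin (2 * a - 1) / 4) := by
  refine integral_eq_sub_of_hasDerivAt_of_le
    (f := fun t => (t - 3 / 2) * √(t * (1 - t)) - arcsin (2 * t - 1) / 4) hab (by fun_prop)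
    (fun t ht => ?_) (intervalIntegrable_betaKernel_two_quarter_mul (g := fun t => 2 * t - 1)
      (by fun_prop) ha hab hb)
  have h0 : 0 < t := ha.trans_lt ht.1
  have h1 : t < 1 := ht.2.trans_le hb
  have hs : 0 < √(t * (1 - t)) := sqrt_pos.2 (by nlinarith)
  have hs2 : √(t * (1 - t)) ^ 2 = t * (1 - t) := sq_sqrt (by nlinarith)
  refine ((((hasDerivAt_id' t).sub_const (3 / 2)).mul (hasDerivAt_sqrt_mul_one_sub h0 h1)).sub
    ((hasDerivAt_arcsin_two_mul_sub_one h0 h1).div_const 4)).congr_deriv ?_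
  rw [betaKernel_two_quarter h0 h1]
  field_simp
  linear_combination 16 * hs2

end Antiderivatives

lemma integral_betaKernel_two_quarter_zero_one :
    ∫ t in (0 : ℝ)..1, betaKernel 2 (1 / 4) t = π / 2 := by
  rw [integral_betaKernel_two_quarter le_rfl zero_le_one le_rfl]
  norm_num [arcsin_one, arcsin_neg_one]
  ring

lemma integral_betaKernel_two_quarter_mul_ramp :
    ∫ t in (0 : ℝ)..1, betaKernel 2 (1 / 4) t * max 0 (2 * t - 1) = 1 / 2 - π / 8 := by
  have hu : Continuous fun t : ℝ => max 0 (2 * t - 1) := by fun_prop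
  have hleft : ∫ t in (0 : ℝ)..1 / 2, betaKernel 2 (1 / 4) t * max 0 (2 * t - 1) = 0 := by
    refine (integral_congr (g := fun _ => 0) fun t ht => ?_).trans integral_zero
    rw [Set.uIcc_of_le (by norm_num)] at ht
    simp [max_eq_left (by linarith [ht.2] : 2 * t - 1 ≤ 0)]
  have hright : ∫ t in (1 / 2 : ℝ)..1, betaKernel 2 (1 / 4) t * max 0 (2 * t - 1) =
      ∫ t in (1 / 2 : ℝ)..1, betaKernel 2 (1 / 4) t * (2 * t - 1) := by
    refine integral_congr fun t ht => ?_
    rw [Set.uIcc_of_le (by norm_num)] at ht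
    simp [max_eq_right (by linarith [ht.1] : 0 ≤ 2 * t - 1)]
  rw [← integral_add_adjacent_intervals (b := 1 / 2)
      (intervalIntegrable_betaKernel_two_quarter_mul hu le_rfl (by norm_num) (by norm_num))
      (intervalIntegrable_betaKernel_two_quarter_mul hu (by norm_num) (by norm_num) le_rfl),
    hleft, hright, integral_betaKernel_two_quarter_mul (by norm_num) (by norm_num) le_rfl,
    show (1 / 2 : ℝ) * (1 - 1 / 2) = (1 / 2) ^ 2 by norm_num, sqrt_sq (by norm_num)]
  norm_num [arcsin_one]
  ring

lemma betaOp_two_quarter_ramp :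
    betaOp 2 (fun t => max 0 (2 * t - 1)) (1 / 4) = 1 / π - 1 / 4 := by
  rw [betaOp_eq_div (by norm_num) (by norm_num), integral_betaKernel_two_quarter_mul_ramp,
    integral_betaKernel_two_quarter_zero_one]
  field_simp
  ring

lemma piecewiseLinOp_two_ramp :
    Set.EqOn (piecewiseLinOp 2 fun t => max 0 (2 * t - 1)) (fun t => max 0 (2 * t - 1))
      (Set.Icc 0 1) := by
  intro t ht
  simp only [piecewiseLinOp, hatFn, sum_range_succ, sum_range_zero]
  norm_num
  rw [abs_of_nonpos (by linarith [ht.2] : 2 * t - 2 ≤ 0)]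
  ring_nf

lemma bernsteinOp_two (f : ℝ → ℝ) (x : ℝ) :
    bernsteinOp 2 f x = f 0 * (1 - x) ^ 2 + f (1 / 2) * 2 * x * (1 - x) + f 1 * x ^ 2 := by
  simp only [bernsteinOp, sum_range_succ, sum_range_zero]
  norm_num [Nat.choose]

/-- For `u(t) = max(0, 2t-1)` one has `𝔅̄₂u(1/4) = 1/π - 1/4`; in particular
`𝔅̄₂ ∘ S_{Δ₂} ≠ B₂`. -/
theorem G2_ne_B2 :
    betaOp 2 (fun t => max 0 (2 * t - 1)) (1/4) = 1 / Real.pi - 1/4 ∧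
    ¬ (∀ f : ℝ → ℝ, ContinuousOn f (Set.Icc 0 1) → ∀ x ∈ Set.Icc (0:ℝ) 1,
        betaOp 2 (piecewiseLinOp 2 f) x = bernsteinOp 2 f x) := by
  refine ⟨betaOp_two_quarter_ramp, fun h => ?_⟩
  have key := h (fun t => max 0 (2 * t - 1)) (by fun_prop) (1 / 4) (by norm_num)
  rw [betaOp_congr piecewiseLinOp_two_ramp, betaOp_two_quarter_ramp, bernsteinOp_two] at key
  norm_num at key
  field_simp at key
  linarith [pi_lt_d2]
end

section
/- Let n ≥ 2. There is no kernel K : [0,1]² → ℝ with K ≥ 0 on [0,1]² and t ↦ K(x,t) Lebesgue integrable on [0,1] for every x ∈ [0,1], such that the integral operator Lf(x) = ∫₀¹ K(x,t) f(t) dt satisfies L(S_{Δₙ}f)(x) = Bₙf(x) for all f ∈ C([0,1]) and all x ∈ [0,1]. -/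
/-!
At `x = 1` every Bernstein polynomial interpolates, `Bₙ f 1 = f 1`. For `f s = 1 - s` this gives
`∫₀¹ K(1,t) · S_{Δₙ}f(t) dt = 0`; since `S_{Δₙ}f > 0` on `[0,1)` and `K(1,·) ≥ 0`, the kernel
`K(1,·)` vanishes almost everywhere on `[0,1]`. But for `f = 1` the same integral must equal `1`.
-/

open MeasureTheory Finset

theorem bernsteinOp_apply_one {n : ℕ} (hn : n ≠ 0) (f : ℝ → ℝ) : bernsteinOp n f 1 = f 1 := by
  unfold bernsteinOp
  rw [sum_eq_single_of_mem n (self_mem_range_succ n)]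
  · simp [div_self (Nat.cast_ne_zero.mpr hn : (n : ℝ) ≠ 0)]
  · intro k hk hkn
    have hpos : 0 < n - k :=
      Nat.sub_pos_of_lt (lt_of_le_of_ne (Nat.lt_succ_iff.mp (mem_range.mp hk)) hkn)
    simp [zero_pow hpos.ne']

theorem hatFn_nonneg (n i : ℕ) (x : ℝ) : 0 ≤ hatFn n i x := le_max_left _ _

theorem hatFn_floor_pos {n : ℕ} {x : ℝ} (hx : 0 ≤ (n : ℝ) * x) : 0 < hatFn n ⌊(n : ℝ) * x⌋₊ x := by
  have hle : (⌊(n : ℝ) * x⌋₊ : ℝ) ≤ n * x := Nat.floor_le hx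
  have hlt : (n : ℝ) * x < ⌊(n : ℝ) * x⌋₊ + 1 := Nat.lt_floor_add_one _
  have habs : |(n : ℝ) * x - ⌊(n : ℝ) * x⌋₊| < 1 := abs_lt.mpr ⟨by linarith, by linarith⟩
  exact lt_max_of_lt_right (by linarith)

theorem continuous_piecewiseLinOp (n : ℕ) (f : ℝ → ℝ) : Continuous (piecewiseLinOp n f) := by
  unfold piecewiseLinOp hatFn
  fun_prop

theorem natCast_div_mem_Icc {i n : ℕ} (hi : i ≤ n) : (i : ℝ) / n ∈ Set.Icc (0 : ℝ) 1 :=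
  ⟨by positivity, div_le_one_of_le₀ (Nat.cast_le.mpr hi) (Nat.cast_nonneg n)⟩

theorem piecewiseLinOp_pos {n : ℕ} (hn : n ≠ 0) {f : ℝ → ℝ}
    (hf : ∀ s ∈ Set.Icc (0 : ℝ) 1, 0 ≤ f s) (hf' : ∀ s ∈ Set.Ico (0 : ℝ) 1, 0 < f s)
    {t : ℝ} (ht : t ∈ Set.Ico (0 : ℝ) 1) : 0 < piecewiseLinOp n f t := by
  have hnR : (0 : ℝ) < n := Nat.cast_pos.mpr (Nat.pos_of_ne_zero hn)
  have hnt : 0 ≤ (n : ℝ) * t := mul_nonneg hnR.le ht.1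
  set i := ⌊(n : ℝ) * t⌋₊
  have hi : i < n := (Nat.floor_lt hnt).mpr (by nlinarith [ht.2])
  refine sum_pos' (fun j hj => ?_) ⟨i, mem_range.mpr (by omega), ?_⟩
  · exact mul_nonneg (hf _ (natCast_div_mem_Icc (Nat.lt_succ_iff.mp (mem_range.mp hj))))
      (hatFn_nonneg _ _ _)
  · have hnode : (i : ℝ) / n ∈ Set.Ico (0 : ℝ) 1 :=
      ⟨by positivity, (div_lt_one hnR).mpr (Nat.cast_lt.mpr hi)⟩
    exact mul_pos (hf' _ hnode) (hatFn_floor_pos hnt)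

theorem intervalIntegral_mul_eq_zero_of_mul_pos {a b : ℝ} (hab : a ≤ b) {K g : ℝ → ℝ}
    (hK : ∀ t ∈ Set.Ioo a b, 0 ≤ K t) (hKint : IntegrableOn K (Set.Icc a b))
    (hg : ContinuousOn g (Set.Icc a b)) (hg_pos : ∀ t ∈ Set.Ioo a b, 0 < g t)
    (hKg : ∫ t in a..b, K t * g t = 0) (h : ℝ → ℝ) : ∫ t in a..b, K t * h t = 0 := by
  rw [intervalIntegral.integral_of_le hab, integral_Ioc_eq_integral_Ioo] at hKg ⊢
  have hKg_int : IntegrableOn (fun t => K t * g t) (Set.Ioo a b) :=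
    (hKint.mul_continuousOn hg isCompact_Icc).mono_set Set.Ioo_subset_Icc_self
  have hKg_nonneg : 0 ≤ᵐ[volume.restrict (Set.Ioo a b)] fun t => K t * g t :=
    (ae_restrict_iff' measurableSet_Ioo).mpr <|
      .of_forall fun t ht => mul_nonneg (hK t ht) (hg_pos t ht).le
  have hK_zero : K =ᵐ[volume.restrict (Set.Ioo a b)] 0 := by
    filter_upwards [(setIntegral_eq_zero_iff_of_nonneg_ae hKg_nonneg hKg_int).mp hKg,
      ae_restrict_mem measurableSet_Ioo] with t hKgt ht
    exact (mul_eq_zero.mp hKgt).resolve_right (hg_pos t ht).ne'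
  calc ∫ t in Set.Ioo a b, K t * h t = ∫ t in Set.Ioo a b, (0 : ℝ) :=
        integral_congr_ae (hK_zero.mono fun t ht => by simp [ht])
    _ = 0 := integral_zero _ _

/-- No positive integral operator `L` satisfies `L ∘ S_{Δₙ} = Bₙ`. -/
theorem no_integral_operator_factorization (n : ℕ) (hn : 2 ≤ n) :
    ¬ ∃ K : ℝ → ℝ → ℝ,
        (∀ x ∈ Set.Icc (0:ℝ) 1, ∀ t ∈ Set.Icc (0:ℝ) 1, 0 ≤ K x t) ∧
        (∀ x ∈ Set.Icc (0:ℝ) 1, IntegrableOn (K x) (Set.Icc (0:ℝ) 1)) ∧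
        (∀ f : ℝ → ℝ, ContinuousOn f (Set.Icc 0 1) → ∀ x ∈ Set.Icc (0:ℝ) 1,
          (∫ t in (0:ℝ)..1, K x t * piecewiseLinOp n f t) = bernsteinOp n f x) := by
  rintro ⟨K, hK_nonneg, hK_int, hK_eq⟩
  have hn0 : n ≠ 0 := by omega
  have one_mem : (1 : ℝ) ∈ Set.Icc (0 : ℝ) 1 := Set.right_mem_Icc.mpr zero_le_one
  have hvanish : ∫ t in (0 : ℝ)..1, K 1 t * piecewiseLinOp n (fun s => 1 - s) t = 0 := by
    rw [hK_eq _ (by fun_prop) 1 one_mem, bernsteinOp_apply_one hn0, sub_self]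
  have hS_pos : ∀ t ∈ Set.Ioo (0 : ℝ) 1, 0 < piecewiseLinOp n (fun s => 1 - s) t :=
    fun t ht => piecewiseLinOp_pos hn0 (fun s hs => sub_nonneg.mpr hs.2)
      (fun s hs => sub_pos.mpr hs.2) (Set.Ioo_subset_Ico_self ht)
  have hzero := intervalIntegral_mul_eq_zero_of_mul_pos zero_le_one
    (fun t ht => hK_nonneg 1 one_mem t (Set.Ioo_subset_Icc_self ht)) (hK_int 1 one_mem)
    (continuous_piecewiseLinOp n _).continuousOn hS_pos hvanish (piecewiseLinOp n fun _ => 1)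
  rw [hK_eq _ continuousOn_const 1 one_mem, bernsteinOp_apply_one hn0] at hzero
  exact one_ne_zero hzero
end

section
/- For every integer n ≥ 1, the Beta operator 𝔅̄ₙ : C([0,1]) → C([0,1]) is injective: if f ∈ C([0,1]) satisfies 𝔅̄ₙf(x) = 0 for all x ∈ [0,1], then f = 0. -/
/-!
The substitution `t = x / (1 + x)` turns the Beta kernel into a Mellin kernel: for `0 < s < n`,
`∫₀¹ t^(s-1) (1-t)^(n-s-1) f t dt` is the Mellin transform at `s` of
`h x = (1 + x)^(-n) f (x / (1 + x))`. Since `h` is bounded near `0` and `O(x^(-n))` at infinity,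
its Mellin transform is holomorphic on the strip `0 < Re s < n`. The Beta-function denominator
`B(s, n - s) = Γ(s) Γ(n - s) / Γ(n)` never vanishes, so `𝔅̄ₙ f = 0` says that this transform
vanishes on the real segment `(0, n)`, hence on the whole strip by the identity theorem.
Mellin inversion on the line `Re s = n / 2` then gives `h = 0`, i.e. `f = 0` on `(0, 1)`; at
the endpoints `f` agrees with `𝔅̄ₙ f`.
-/

open MeasureTheory

open Set Filter Topology Complex

theorem Complex.betaIntegral_ofReal (p q : ℝ) :
    betaIntegral p q = ↑(∫ t in (0:ℝ)..1, t ^ (p - 1) * (1 - t) ^ (q - 1)) := by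
  rw [betaIntegral, ← intervalIntegral.integral_ofReal]
  refine intervalIntegral.integral_congr fun t ht => ?_
  rw [uIcc_of_le zero_le_one] at ht
  rw [ofReal_mul, ofReal_cpow ht.1, ofReal_cpow (sub_nonneg.2 ht.2)]
  push_cast
  ring

theorem intervalIntegral_rpow_mul_one_sub_rpow_ne_zero {p q : ℝ} (hp : 0 < p) (hq : 0 < q) :
    ∫ t in (0:ℝ)..1, t ^ (p - 1) * (1 - t) ^ (q - 1) ≠ 0 := by
  have hΓ := Gamma_mul_Gamma_eq_betaIntegral (s := p) (t := q) (by simpa) (by simpa)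
  intro h₀
  rw [betaIntegral_ofReal, h₀, ofReal_zero, mul_zero] at hΓ
  exact mul_ne_zero (Gamma_ne_zero_of_re_pos (by simpa)) (Gamma_ne_zero_of_re_pos (by simpa)) hΓ

theorem image_div_one_add_Ioi : (fun x : ℝ => x / (1 + x)) '' Ioi 0 = Ioo 0 1 := by
  ext t
  constructor
  · rintro ⟨x, hx, rfl⟩
    have hx : (0:ℝ) < x := hx
    exact ⟨by positivity, (div_lt_one (by positivity)).2 (by linarith)⟩
  · rintro ⟨ht₀, ht₁⟩
    refine ⟨t / (1 - t), div_pos ht₀ (sub_pos.2 ht₁), ?_⟩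
    have : 1 - t ≠ 0 := (sub_pos.2 ht₁).ne'
    field_simp
    ring

theorem integral_Ioo_rpow_mul_one_sub_rpow_mul (p q : ℝ) (φ : ℝ → ℝ) :
    ∫ t in Ioo 0 1, t ^ (p - 1) * (1 - t) ^ (q - 1) * φ t =
      ∫ x in Ioi 0, x ^ (p - 1) * ((1 + x) ^ (-(p + q)) * φ (x / (1 + x))) := by
  have hderiv : ∀ x ∈ Ioi (0:ℝ),
      HasDerivWithinAt (fun x : ℝ => x / (1 + x)) ((1 + x) ^ 2)⁻¹ (Ioi 0) x := by
    intro x hx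
    have hx : (0:ℝ) < 1 + x := by linarith [mem_Ioi.1 hx]
    refine ((hasDerivAt_id x).div ((hasDerivAt_id x).const_add 1)
      hx.ne').hasDerivWithinAt.congr_deriv ?_
    simp only [id]
    field_simp
    ring
  have hinj : InjOn (fun x : ℝ => x / (1 + x)) (Ioi 0) := by
    intro x hx y hy hxy
    have hx : (0:ℝ) < 1 + x := by linarith [mem_Ioi.1 hx]
    have hy : (0:ℝ) < 1 + y := by linarith [mem_Ioi.1 hy]
    rw [div_eq_div_iff hx.ne' hy.ne'] at hxy
    linarith
  rw [← image_div_one_add_Ioi,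
    integral_image_eq_integral_abs_deriv_smul measurableSet_Ioi hderiv hinj]
  refine setIntegral_congr_fun measurableSet_Ioi fun x hx => ?_
  have hx₀ : (0:ℝ) < x := hx
  have hx₁ : (0:ℝ) < 1 + x := by linarith
  have hsub : 1 - x / (1 + x) = (1 + x)⁻¹ := by field_simp; ring
  have hexp : (1 + x) ^ (-((2:ℕ):ℝ)) * (1 + x) ^ (-(p - 1)) * (1 + x) ^ (-(q - 1)) =
      (1 + x) ^ (-(p + q)) := by
    rw [← Real.rpow_add hx₁, ← Real.rpow_add hx₁]
    congr 1
    push_cast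
    ring
  simp only [smul_eq_mul]
  rw [hsub, abs_of_pos (by positivity), Real.div_rpow hx₀.le hx₁.le, Real.inv_rpow hx₁.le,
    ← Real.rpow_natCast, ← Real.rpow_neg hx₁.le, div_eq_mul_inv, ← Real.rpow_neg hx₁.le,
    ← Real.rpow_neg hx₁.le, ← hexp]
  ring

theorem Complex.eqOn_zero_of_differentiableOn_re_preimage_Ioo {E : Type*}
    [NormedAddCommGroup E] [NormedSpace ℂ E] [CompleteSpace E] {F : ℂ → E} {a b : ℝ}
    (hF : DifferentiableOn ℂ F (re ⁻¹' Ioo a b)) (hF₀ : ∀ s ∈ Ioo a b, F s = 0) :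
    EqOn F 0 (re ⁻¹' Ioo a b) := by
  intro z hz
  obtain ⟨c, hc⟩ : ∃ c, c ∈ Ioo a b := nonempty_Ioo.2 (hz.1.trans hz.2)
  have hofReal : Tendsto ((↑) : ℝ → ℂ) (𝓝[≠] c) (𝓝[≠] (c : ℂ)) :=
    tendsto_nhdsWithin_of_tendsto_nhds_of_eventually_within _ continuous_ofReal.continuousWithinAt
      (eventually_nhdsWithin_of_forall fun x hx => ofReal_injective.ne hx)
  have hfreq : ∃ᶠ s : ℝ in 𝓝[≠] c, F s = 0 :=
    ((eventually_nhdsWithin_of_eventually_nhds (Ioo_mem_nhds hc.1 hc.2)).mono hF₀).frequently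
  have hstrip : IsPreconnected (re ⁻¹' Ioo a b) :=
    ((convex_Ioo a b).is_linear_preimage reLm.isLinear).isPreconnected
  have hanalytic := hF.analyticOnNhd (isOpen_Ioo.preimage continuous_re)
  exact hanalytic.eqOn_zero_of_preconnected_of_frequently_eq_zero hstrip (z₀ := (c : ℂ))
    (by rwa [mem_preimage, ofReal_re]) (hofReal.frequently (p := fun w => F w = 0) hfreq) hz

noncomputable def betaPullback (a : ℝ) (f : ℝ → ℝ) (x : ℝ) : ℂ :=
  ((1 + x) ^ (-a) * f (x / (1 + x)) : ℝ)

theorem mellin_betaPullback_ofReal (p q : ℝ) (f : ℝ → ℝ) :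
    mellin (betaPullback (p + q) f) p =
      ↑(∫ t in Ioo 0 1, t ^ (p - 1) * (1 - t) ^ (q - 1) * f t) := by
  rw [integral_Ioo_rpow_mul_one_sub_rpow_mul, mellin, ← integral_complex_ofReal]
  refine setIntegral_congr_fun measurableSet_Ioi fun x hx => ?_
  simp only [betaPullback, smul_eq_mul, ofReal_mul, ofReal_cpow (le_of_lt hx), ofReal_sub,
    ofReal_one]

section BetaPullback

variable {f : ℝ → ℝ}

theorem continuousAt_betaPullback (hf : ContinuousOn f (Icc 0 1)) (a : ℝ) {x : ℝ} (hx : 0 < x) :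
    ContinuousAt (betaPullback a f) x := by
  have hx₁ : (0:ℝ) < 1 + x := by linarith
  have hmem : x / (1 + x) ∈ Ioo (0:ℝ) 1 := ⟨by positivity, (div_lt_one hx₁).2 (by linarith)⟩
  have hdiv : ContinuousAt (fun x : ℝ => x / (1 + x)) x :=
    continuousAt_id.div (continuousAt_const.add continuousAt_id) hx₁.ne'
  refine continuous_ofReal.continuousAt.comp (ContinuousAt.mul ?_ ?_)
  · exact (continuousAt_const.add continuousAt_id).rpow_const (Or.inl hx₁.ne')
  · exact ContinuousAt.comp (f := fun x : ℝ => x / (1 + x))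
      (hf.continuousAt (Icc_mem_nhds hmem.1 hmem.2)) hdiv

theorem locallyIntegrableOn_betaPullback (hf : ContinuousOn f (Icc 0 1)) (a : ℝ) :
    LocallyIntegrableOn (betaPullback a f) (Ioi 0) :=
  ContinuousOn.locallyIntegrableOn
    (fun _ hx => (continuousAt_betaPullback hf a hx).continuousWithinAt) measurableSet_Ioi

theorem exists_norm_betaPullback_le (hf : ContinuousOn f (Icc 0 1)) (a : ℝ) :
    ∃ M, 0 ≤ M ∧ ∀ x, 0 ≤ x → ‖betaPullback a f x‖ ≤ M * (1 + x) ^ (-a) := by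
  obtain ⟨M, hM⟩ := isCompact_Icc.exists_bound_of_continuousOn hf
  refine ⟨M, (norm_nonneg _).trans (hM 0 ⟨le_rfl, zero_le_one⟩), fun x hx => ?_⟩
  have hx₁ : (0:ℝ) < 1 + x := by linarith
  have hmem : x / (1 + x) ∈ Icc (0:ℝ) 1 := ⟨by positivity, (div_le_one hx₁).2 (by linarith)⟩
  rw [betaPullback, norm_real, norm_mul, Real.norm_of_nonneg (by positivity), mul_comm]
  gcongr
  exact hM _ hmem

theorem betaPullback_isBigO_atTop (hf : ContinuousOn f (Icc 0 1)) {a : ℝ} (ha : 0 ≤ a) :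
    betaPullback a f =O[atTop] (· ^ (-a)) := by
  obtain ⟨M, hM₀, hM⟩ := exists_norm_betaPullback_le hf a
  refine Asymptotics.IsBigO.of_bound M ?_
  filter_upwards [eventually_gt_atTop 0] with x hx
  rw [Real.norm_of_nonneg (by positivity)]
  refine (hM x hx.le).trans (mul_le_mul_of_nonneg_left ?_ hM₀)
  exact Real.rpow_le_rpow_of_nonpos hx (by linarith) (neg_nonpos.2 ha)

theorem betaPullback_isBigO_nhdsGT_zero (hf : ContinuousOn f (Icc 0 1)) {a : ℝ} (ha : 0 ≤ a) :
    betaPullback a f =O[𝓝[>] 0] (· ^ (-(0:ℝ))) := by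
  obtain ⟨M, hM₀, hM⟩ := exists_norm_betaPullback_le hf a
  refine Asymptotics.IsBigO.of_bound M ?_
  filter_upwards [self_mem_nhdsWithin] with x (hx : 0 < x)
  rw [neg_zero, Real.rpow_zero, norm_one, mul_one]
  refine (hM x hx.le).trans (mul_le_of_le_one_right hM₀ ?_)
  exact Real.rpow_le_one_of_one_le_of_nonpos (by linarith) (neg_nonpos.2 ha)

theorem mellinConvergent_betaPullback (hf : ContinuousOn f (Icc 0 1)) {a : ℝ} {s : ℂ}
    (hs : s.re ∈ Ioo 0 a) : MellinConvergent (betaPullback a f) s :=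
  mellinConvergent_of_isBigO_rpow (locallyIntegrableOn_betaPullback hf a)
    (betaPullback_isBigO_atTop hf (hs.1.trans hs.2).le) hs.2
    (betaPullback_isBigO_nhdsGT_zero hf (hs.1.trans hs.2).le) hs.1

theorem differentiableOn_mellin_betaPullback (hf : ContinuousOn f (Icc 0 1)) (a : ℝ) :
    DifferentiableOn ℂ (mellin (betaPullback a f)) (re ⁻¹' Ioo 0 a) := fun _ hs =>
  (mellin_differentiableAt_of_isBigO_rpow (locallyIntegrableOn_betaPullback hf a)
    (betaPullback_isBigO_atTop hf (hs.1.trans hs.2).le) hs.2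
    (betaPullback_isBigO_nhdsGT_zero hf (hs.1.trans hs.2).le) hs.1).differentiableWithinAt

theorem eqOn_zero_of_mellin_betaPullback_eq_zero (hf : ContinuousOn f (Icc 0 1)) {a : ℝ}
    (ha : 0 < a) (h₀ : ∀ s ∈ Ioo 0 a, mellin (betaPullback a f) s = 0) :
    EqOn f 0 (Ioo 0 1) := by
  have hσ : (↑(a / 2) : ℂ).re ∈ Ioo 0 a := by rw [ofReal_re]; constructor <;> linarith
  have hline (y : ℝ) : mellin (betaPullback a f) (↑(a / 2) + y * I) = 0 :=
    eqOn_zero_of_differentiableOn_re_preimage_Ioo (differentiableOn_mellin_betaPullback hf a) h₀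
      (by simpa using hσ)
  have hpullback {x : ℝ} (hx : 0 < x) : betaPullback a f x = 0 := by
    rw [← mellinInv_mellin_eq (a / 2) _ hx (mellinConvergent_betaPullback hf hσ) ?_
      (continuousAt_betaPullback hf a hx)]
    · simp only [mellinInv, hline, smul_zero, integral_zero]
    · simp only [VerticalIntegrable, hline]
      exact integrable_zero _ _ _
  rw [← image_div_one_add_Ioi]
  rintro _ ⟨x, hx, rfl⟩
  have hx : (0:ℝ) < x := hx
  have := hpullback hx
  rw [betaPullback, ofReal_eq_zero] at this
  exact (mul_eq_zero.1 this).resolve_left (Real.rpow_pos_of_pos (by linarith) _).ne'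

end BetaPullback

theorem betaOp_eq_zero_iff_mellin_betaPullback {n : ℕ} (hn : 0 < n) (f : ℝ → ℝ) {x : ℝ}
    (hx : x ∈ Ioo 0 1) :
    betaOp n f x = 0 ↔ mellin (betaPullback n f) ((n * x : ℝ) : ℂ) = 0 := by
  have hn₀ : (0:ℝ) < n := by exact_mod_cast hn
  have hp : 0 < (n:ℝ) * x := mul_pos hn₀ hx.1
  have hq : 0 < (n:ℝ) * (1 - x) := mul_pos hn₀ (sub_pos.2 hx.2)
  have hmellin := mellin_betaPullback_ofReal (n * x) (n * (1 - x)) f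
  rw [show (n:ℝ) * x + n * (1 - x) = n by ring] at hmellin
  rw [betaOp, if_neg hx.1.ne', if_neg hx.2.ne, div_eq_zero_iff,
    or_iff_left (intervalIntegral_rpow_mul_one_sub_rpow_ne_zero hp hq), hmellin, ofReal_eq_zero,
    intervalIntegral.integral_of_le zero_le_one, integral_Ioc_eq_integral_Ioo]

/-- The Beta operator is injective on `C[0,1]`. -/
theorem betaOp_injective (n : ℕ) (hn : 1 ≤ n) (f : ℝ → ℝ)
    (hf : ContinuousOn f (Set.Icc 0 1))
    (h : ∀ x ∈ Set.Icc (0:ℝ) 1, betaOp n f x = 0) :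
    ∀ x ∈ Set.Icc (0:ℝ) 1, f x = 0 := by
  have hn₀ : (0:ℝ) < n := by exact_mod_cast hn
  have hmellin : ∀ s ∈ Ioo 0 (n:ℝ), mellin (betaPullback n f) s = 0 := by
    intro s hs
    have hx : s / n ∈ Ioo (0:ℝ) 1 := ⟨div_pos hs.1 hn₀, (div_lt_one hn₀).2 hs.2⟩
    have := (betaOp_eq_zero_iff_mellin_betaPullback hn f hx).1 (h _ (Ioo_subset_Icc_self hx))
    rwa [mul_div_cancel₀ _ hn₀.ne'] at this
  intro x hx
  rcases hx.1.eq_or_lt with rfl | hx₀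
  · simpa [betaOp] using h 0 ⟨le_rfl, zero_le_one⟩
  rcases hx.2.eq_or_lt with rfl | hx₁
  · simpa [betaOp] using h 1 ⟨zero_le_one, le_rfl⟩
  exact eqOn_zero_of_mellin_betaPullback_eq_zero hf hn₀ hmellin ⟨hx₀, hx₁⟩
end

section
/- For every integer n ≥ 1 and every integer k ≥ 0 there exists a monic real polynomial q of degree k such that 𝔅̄ₙq(x) = η_k^{(n)} q(x) for all x ∈ [0,1], where η_k^{(n)} = (n−1)!·n^k/(n+k−1)!. Thus the numbers η_k^{(n)}, 0 ≤ k ≤ n, are eigenvalues of the Beta operator acting on polynomials of degree at most n. -/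
open MeasureTheory Finset Polynomial

/-!
On polynomials the Beta operator acts through the linear map `T` sending `t ^ j` to
`(nx)(nx+1)⋯(nx+j-1) / (n(n+1)⋯(n+j-1))`: this is a ratio of two Beta integrals, i.e. of Gamma
values. Hence `T` is triangular on the monomial basis, with diagonal entries
`η_j = n ^ j / (n(n+1)⋯(n+j-1))`, which strictly decrease from `j = 1` on, while `η₀ = η₁ = 1`.
For `k ≠ 1` the map `T - η_k` is therefore invertible on polynomials of degree `< k`, and solving
`(T - η_k) r = (T - η_k) X ^ k` gives the eigenpolynomial `X ^ k - r`; for `k = 1`, `T X = X`.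
-/

namespace Polynomial

section Triangular

variable {K : Type*} [Field K] {T : K[X] →ₗ[K] K[X]} {d : ℕ → K}

theorem eq_zero_of_apply_eq_smul_of_degree_lt
    (hdiag : ∀ p, (T p).coeff p.natDegree = d p.natDegree * p.leadingCoeff)
    {k : ℕ} (hd : ∀ j < k, d j ≠ d k) {p : K[X]} (hp : p.degree < k) (hTp : T p = d k • p) :
    p = 0 := by
  by_contra hp0
  have hlt : p.natDegree < k := (natDegree_lt_iff_degree_lt hp0).2 hp
  have hcoeff := hdiag p
  rw [hTp, coeff_smul, smul_eq_mul, ← leadingCoeff] at hcoeff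
  exact hd _ hlt (mul_right_cancel₀ (leadingCoeff_ne_zero.2 hp0) hcoeff).symm

theorem exists_monic_eigenvector_of_triangular
    (hdeg : ∀ p, (T p).natDegree ≤ p.natDegree)
    (hdiag : ∀ p, (T p).coeff p.natDegree = d p.natDegree * p.leadingCoeff)
    {k : ℕ} (hd : ∀ j < k, d j ≠ d k) :
    ∃ q : K[X], q.Monic ∧ q.natDegree = k ∧ T q = d k • q := by
  set S : K[X] →ₗ[K] K[X] := T - d k • LinearMap.id
  have hS_apply (p : K[X]) : S p = T p - d k • p := rfl
  have hS_degree (p : K[X]) : (S p).degree ≤ p.degree := by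
    rcases eq_or_ne p 0 with rfl | hp
    · simp
    rw [degree_eq_natDegree hp, hS_apply]
    exact degree_le_of_natDegree_le <|
      (natDegree_sub_le _ _).trans (max_le (hdeg p) (natDegree_smul_le _ _))
  have hS_mapsTo : ∀ p ∈ degreeLT K k, S p ∈ degreeLT K k := fun p hp =>
    mem_degreeLT.2 ((hS_degree p).trans_lt (mem_degreeLT.1 hp))
  -- Below degree `k` the eigenvalue `d k` does not occur, so `S` is bijective there.
  have hS_surj : Function.Surjective (S.restrict hS_mapsTo) := by
    refine LinearMap.injective_iff_surjective.1 <| (injective_iff_map_eq_zero _).2 ?_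
    rintro ⟨p, hp⟩ hSp
    rw [Subtype.ext_iff] at hSp ⊢
    exact eq_zero_of_apply_eq_smul_of_degree_lt hdiag hd (mem_degreeLT.1 hp)
      (sub_eq_zero.1 hSp)
  have hS_X_pow : S (X ^ k) ∈ degreeLT K k := by
    refine mem_degreeLT.2 <| ((hS_degree _).trans (degree_X_pow_le k)).lt_of_ne fun h =>
      coeff_ne_zero_of_eq_degree h ?_
    simpa [hS_apply, sub_eq_zero] using hdiag (X ^ k)
  obtain ⟨⟨r, hr⟩, hSr⟩ := hS_surj ⟨S (X ^ k), hS_X_pow⟩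
  rw [Subtype.ext_iff] at hSr
  have hr_deg : r.degree < k := mem_degreeLT.1 hr
  refine ⟨X ^ k - r, monic_X_pow_sub hr_deg, ?_, ?_⟩
  · exact natDegree_eq_of_degree_eq_some <| by
      rw [degree_sub_eq_left_of_degree_lt (by rwa [degree_X_pow]), degree_X_pow]
  · rw [← sub_eq_zero, ← hS_apply, map_sub]
    exact sub_eq_zero.2 hSr.symm

end Triangular

section ExtendMonomials

variable {R : Type*} [CommSemiring R] (P : ℕ → R[X])

noncomputable def extendMonomials : R[X] →ₗ[R] R[X] :=
  lsum fun j => LinearMap.toSpanSingleton R R[X] (P j)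

theorem extendMonomials_apply (p : R[X]) :
    extendMonomials P p = ∑ j ∈ range (p.natDegree + 1), p.coeff j • P j :=
  sum_over_range p fun _ => zero_smul R _

theorem extendMonomials_X : extendMonomials P X = P 1 := by
  simp [extendMonomials]

variable {P}

theorem natDegree_extendMonomials_le (hP : ∀ j, (P j).natDegree ≤ j) (p : R[X]) :
    (extendMonomials P p).natDegree ≤ p.natDegree := by
  rw [extendMonomials_apply]
  exact natDegree_sum_le_of_forall_le _ _ fun j hj =>
    (natDegree_smul_le _ _).trans <| (hP j).trans <| Nat.lt_succ_iff.1 (mem_range.1 hj)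

theorem coeff_extendMonomials_natDegree (hP : ∀ j, (P j).natDegree ≤ j) (p : R[X]) :
    (extendMonomials P p).coeff p.natDegree =
      (P p.natDegree).coeff p.natDegree * p.leadingCoeff := by
  rw [extendMonomials_apply, finsetSum_coeff, sum_range_succ, sum_eq_zero, zero_add,
    coeff_smul, smul_eq_mul, mul_comm, leadingCoeff]
  intro j hj
  rw [coeff_smul, coeff_eq_zero_of_natDegree_lt ((hP j).trans_lt (mem_range.1 hj)), smul_zero]

end ExtendMonomials

end Polynomial

namespace Real

theorem Gamma_add_nat_eq_ascPochhammer_mul {a : ℝ} (ha : 0 < a) (j : ℕ) :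
    Gamma (a + j) = (ascPochhammer ℝ j).eval a * Gamma a := by
  induction j with
  | zero => simp
  | succ j ih =>
    rw [Nat.cast_succ, ← add_assoc, Gamma_add_one (by positivity), ih, ascPochhammer_succ_eval]
    ring

section BetaIntegral

variable {a b : ℝ}

theorem ofReal_rpow_mul_one_sub_rpow {t : ℝ} (ht : t ∈ Set.Icc 0 1) :
    ((t ^ (a - 1) * (1 - t) ^ (b - 1) : ℝ) : ℂ) =
      (t : ℂ) ^ ((a : ℂ) - 1) * (1 - (t : ℂ)) ^ ((b : ℂ) - 1) := by
  push_cast [Complex.ofReal_cpow ht.1, Complex.ofReal_cpow (sub_nonneg.2 ht.2)]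
  rfl

theorem intervalIntegrable_rpow_mul_one_sub_rpow (ha : 0 < a) (hb : 0 < b) :
    IntervalIntegrable (fun t : ℝ => t ^ (a - 1) * (1 - t) ^ (b - 1)) volume 0 1 := by
  refine (Complex.betaIntegral_convergent (u := a) (v := b) (by simpa) (by simpa)).norm.congr_uIoo
    fun t ht => ?_
  rw [Set.uIoo_of_le zero_le_one] at ht
  dsimp only
  rw [← ofReal_rpow_mul_one_sub_rpow (Set.Ioo_subset_Icc_self ht), Complex.norm_real,
    norm_of_nonneg (mul_nonneg (rpow_nonneg ht.1.le _) (rpow_nonneg (sub_nonneg.2 ht.2.le) _))]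

theorem integral_rpow_mul_one_sub_rpow (ha : 0 < a) (hb : 0 < b) :
    ∫ t in (0 : ℝ)..1, t ^ (a - 1) * (1 - t) ^ (b - 1) = Gamma a * Gamma b / Gamma (a + b) := by
  apply Complex.ofReal_injective
  rw [← intervalIntegral.integral_ofReal]
  have hβ := Complex.betaIntegral_eq_Gamma_mul_div a b (by simpa) (by simpa)
  push_cast [← Complex.Gamma_ofReal]
  rw [← hβ, Complex.betaIntegral]
  refine intervalIntegral.integral_congr fun t ht => ?_
  rw [Set.uIcc_of_le zero_le_one] at ht
  exact_mod_cast ofReal_rpow_mul_one_sub_rpow ht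

theorem rpow_mul_one_sub_rpow_mul_pow {t : ℝ} (ht : 0 < t) (j : ℕ) :
    t ^ (a - 1) * (1 - t) ^ (b - 1) * t ^ j = t ^ (a + j - 1) * (1 - t) ^ (b - 1) := by
  rw [mul_right_comm, ← rpow_natCast, ← rpow_add ht, sub_add_eq_add_sub]

theorem intervalIntegrable_rpow_mul_one_sub_rpow_mul_pow (ha : 0 < a) (hb : 0 < b) (j : ℕ) :
    IntervalIntegrable (fun t : ℝ => t ^ (a - 1) * (1 - t) ^ (b - 1) * t ^ j) volume 0 1 := by
  refine (intervalIntegrable_rpow_mul_one_sub_rpow (a := a + j) (by positivity) hb).congr_uIoo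
    fun t ht => ?_
  rw [Set.uIoo_of_le zero_le_one] at ht
  exact (rpow_mul_one_sub_rpow_mul_pow ht.1 j).symm

theorem integral_rpow_mul_one_sub_rpow_mul_pow (ha : 0 < a) (hb : 0 < b) (j : ℕ) :
    ∫ t in (0 : ℝ)..1, t ^ (a - 1) * (1 - t) ^ (b - 1) * t ^ j =
      (ascPochhammer ℝ j).eval a / (ascPochhammer ℝ j).eval (a + b) *
        ∫ t in (0 : ℝ)..1, t ^ (a - 1) * (1 - t) ^ (b - 1) := by
  have hshift : ∫ t in (0 : ℝ)..1, t ^ (a - 1) * (1 - t) ^ (b - 1) * t ^ j =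
      ∫ t in (0 : ℝ)..1, t ^ (a + j - 1) * (1 - t) ^ (b - 1) := by
    refine intervalIntegral.integral_congr_uIoo fun t ht => ?_
    rw [Set.uIoo_of_le zero_le_one] at ht
    exact rpow_mul_one_sub_rpow_mul_pow ht.1 j
  rw [hshift, integral_rpow_mul_one_sub_rpow (by positivity) hb,
    integral_rpow_mul_one_sub_rpow ha hb, add_right_comm, Gamma_add_nat_eq_ascPochhammer_mul ha,
    Gamma_add_nat_eq_ascPochhammer_mul (add_pos ha hb)]
  have hpoch := (ascPochhammer_pos j _ (add_pos ha hb)).ne'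
  have hΓ := (Gamma_pos_of_pos (add_pos ha hb)).ne'
  field_simp

end BetaIntegral

end Real

-- `betaOp n` sends `t ^ j` to this polynomial, by `Real.integral_rpow_mul_one_sub_rpow_mul_pow`.
noncomputable def betaImage (n j : ℕ) : ℝ[X] :=
  C ((ascPochhammer ℝ j).eval (n : ℝ))⁻¹ * (ascPochhammer ℝ j).comp (C (n : ℝ) * X)

noncomputable def betaEigenvalue (n k : ℕ) : ℝ :=
  (n : ℝ) ^ k / (ascPochhammer ℝ k).eval (n : ℝ)

noncomputable def betaPolyOp (n : ℕ) : ℝ[X] →ₗ[ℝ] ℝ[X] :=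
  extendMonomials (betaImage n)

section BetaOperator

variable {n : ℕ}

theorem eval_betaImage (j : ℕ) (x : ℝ) :
    (betaImage n j).eval x =
      (ascPochhammer ℝ j).eval (n * x) / (ascPochhammer ℝ j).eval (n : ℝ) := by
  simp [betaImage, eval_comp, div_eq_inv_mul]

theorem natDegree_betaImage_le (j : ℕ) : (betaImage n j).natDegree ≤ j := by
  refine (natDegree_C_mul_le _ _).trans <| natDegree_comp_le.trans ?_
  rw [ascPochhammer_natDegree]
  exact (Nat.mul_le_mul_left _ ((natDegree_C_mul_le _ _).trans natDegree_X_le)).trans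
    (mul_one j).le

theorem coeff_betaImage_self (hn : 0 < n) (j : ℕ) :
    (betaImage n j).coeff j = betaEigenvalue n j := by
  have hn' : (n : ℝ) ≠ 0 := Nat.cast_ne_zero.2 hn.ne'
  have hdeg : ((ascPochhammer ℝ j).comp (C (n : ℝ) * X)).natDegree = j := by
    rw [natDegree_comp, ascPochhammer_natDegree, natDegree_C_mul_X _ hn', mul_one]
  have hlead : ((ascPochhammer ℝ j).comp (C (n : ℝ) * X)).leadingCoeff = (n : ℝ) ^ j := by
    rw [leadingCoeff_comp (by rw [natDegree_C_mul_X _ hn']; exact one_ne_zero),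
      (monic_ascPochhammer ℝ j).leadingCoeff, leadingCoeff_C_mul_X, ascPochhammer_natDegree,
      one_mul]
  rw [leadingCoeff, hdeg] at hlead
  rw [betaImage, coeff_C_mul, hlead, betaEigenvalue, div_eq_inv_mul]

theorem betaImage_one (hn : 0 < n) : betaImage n 1 = X := by
  have hn' : (n : ℝ) ≠ 0 := Nat.cast_ne_zero.2 hn.ne'
  rw [betaImage, ascPochhammer_one, eval_X, X_comp, ← mul_assoc, ← C_mul, inv_mul_cancel₀ hn',
    C_1, one_mul]

theorem betaEigenvalue_zero : betaEigenvalue n 0 = 1 := by simp [betaEigenvalue]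

theorem betaEigenvalue_one (hn : 0 < n) : betaEigenvalue n 1 = 1 := by
  simp [betaEigenvalue, Nat.cast_ne_zero.2 hn.ne']

theorem betaEigenvalue_succ (j : ℕ) :
    betaEigenvalue n (j + 1) = betaEigenvalue n j * (n / (n + j)) := by
  rw [betaEigenvalue, betaEigenvalue, ascPochhammer_succ_eval, pow_succ, mul_div_mul_comm]

theorem betaEigenvalue_pos (hn : 0 < n) (j : ℕ) : 0 < betaEigenvalue n j := by
  have hn' : (0 : ℝ) < n := Nat.cast_pos.2 hn
  exact div_pos (pow_pos hn' j) (ascPochhammer_pos j _ hn')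

theorem betaEigenvalue_succ_lt (hn : 0 < n) {j : ℕ} (hj : 1 ≤ j) :
    betaEigenvalue n (j + 1) < betaEigenvalue n j := by
  have hn' : (0 : ℝ) < n := Nat.cast_pos.2 hn
  have hj' : (1 : ℝ) ≤ j := Nat.one_le_cast.2 hj
  rw [betaEigenvalue_succ]
  refine mul_lt_of_lt_one_right (betaEigenvalue_pos hn j) ((div_lt_one (by positivity)).2 ?_)
  linarith

theorem betaEigenvalue_ne (hn : 0 < n) {j k : ℕ} (hjk : j < k) (hk : k ≠ 1) :
    betaEigenvalue n j ≠ betaEigenvalue n k := by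
  have hanti : StrictAnti fun i => betaEigenvalue n (i + 1) :=
    strictAnti_nat_of_succ_lt fun i => betaEigenvalue_succ_lt hn (Nat.le_add_left 1 i)
  obtain ⟨k, rfl⟩ : ∃ k', k = k' + 1 := Nat.exists_eq_succ_of_ne_zero (by omega)
  rcases j with _ | j
  · rw [betaEigenvalue_zero, ← betaEigenvalue_one hn]
    exact (hanti (by omega : 0 < k)).ne'
  · exact (hanti (by omega : j < k)).ne'

theorem betaEigenvalue_eq_factorial (hn : 0 < n) (k : ℕ) :
    betaEigenvalue n k = (n - 1).factorial * (n : ℝ) ^ k / (n + k - 1).factorial := by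
  rw [betaEigenvalue, ascPochhammer_nat_eq_natCast_ascFactorial,
    ← Nat.factorial_mul_ascFactorial' n k hn, Nat.cast_mul, mul_div_mul_left _ _ (by positivity)]

theorem eval_betaPolyOp (p : ℝ[X]) (x : ℝ) :
    (betaPolyOp n p).eval x = ∑ j ∈ range (p.natDegree + 1),
      p.coeff j * ((ascPochhammer ℝ j).eval (n * x) / (ascPochhammer ℝ j).eval (n : ℝ)) := by
  simp [betaPolyOp, extendMonomials_apply, eval_finsetSum, eval_betaImage]

theorem eval_betaPolyOp_zero (p : ℝ[X]) : (betaPolyOp n p).eval 0 = p.eval 0 := by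
  rw [eval_betaPolyOp, sum_range_succ', sum_eq_zero fun j _ => by simp, zero_add,
    coeff_zero_eq_eval_zero]
  simp

theorem eval_betaPolyOp_one (hn : 0 < n) (p : ℝ[X]) : (betaPolyOp n p).eval 1 = p.eval 1 := by
  rw [eval_betaPolyOp, eval_eq_sum_range]
  refine sum_congr rfl fun j _ => ?_
  rw [mul_one, div_self (ascPochhammer_pos j _ (Nat.cast_pos.2 hn)).ne', one_pow]

theorem betaOp_eval_of_mem_Ioo (hn : 0 < n) (p : ℝ[X]) {x : ℝ} (hx : x ∈ Set.Ioo 0 1) :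
    betaOp n (fun t => p.eval t) x = (betaPolyOp n p).eval x := by
  have ha : 0 < (n : ℝ) * x := mul_pos (Nat.cast_pos.2 hn) hx.1
  have hb : 0 < (n : ℝ) * (1 - x) := mul_pos (Nat.cast_pos.2 hn) (sub_pos.2 hx.2)
  have hab : (n : ℝ) * x + n * (1 - x) = n := by ring
  have hB :
      ∫ t in (0 : ℝ)..1, t ^ ((n : ℝ) * x - 1) * (1 - t) ^ ((n : ℝ) * (1 - x) - 1) ≠ 0 := by
    rw [Real.integral_rpow_mul_one_sub_rpow ha hb]
    positivity
  have hexpand :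
      (fun t : ℝ => t ^ ((n : ℝ) * x - 1) * (1 - t) ^ ((n : ℝ) * (1 - x) - 1) * p.eval t) =
        fun t => ∑ j ∈ range (p.natDegree + 1),
          p.coeff j * (t ^ ((n : ℝ) * x - 1) * (1 - t) ^ ((n : ℝ) * (1 - x) - 1) * t ^ j) := by
    funext t
    rw [eval_eq_sum_range, mul_sum]
    exact sum_congr rfl fun j _ => by ring
  rw [betaOp, if_neg hx.1.ne', if_neg hx.2.ne, hexpand, intervalIntegral.integral_finsetSum
    fun j _ => (Real.intervalIntegrable_rpow_mul_one_sub_rpow_mul_pow ha hb j).const_mul _,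
    eval_betaPolyOp, sum_div]
  refine sum_congr rfl fun j _ => ?_
  rw [intervalIntegral.integral_const_mul, Real.integral_rpow_mul_one_sub_rpow_mul_pow ha hb, hab]
  field_simp

theorem betaOp_eval_eq_eval_betaPolyOp (hn : 0 < n) (p : ℝ[X]) {x : ℝ}
    (hx : x ∈ Set.Icc 0 1) :
    betaOp n (fun t => p.eval t) x = (betaPolyOp n p).eval x := by
  rcases eq_or_ne x 0 with rfl | hx0
  · simp [betaOp, eval_betaPolyOp_zero]
  rcases eq_or_ne x 1 with rfl | hx1
  · simp [betaOp, eval_betaPolyOp_one hn]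
  exact betaOp_eval_of_mem_Ioo hn p ⟨hx.1.lt_of_ne' hx0, hx.2.lt_of_ne hx1⟩

theorem exists_monic_betaPolyOp_eigenvector (hn : 0 < n) (k : ℕ) :
    ∃ q : ℝ[X], q.Monic ∧ q.natDegree = k ∧ betaPolyOp n q = betaEigenvalue n k • q := by
  -- `η₀ = η₁`, so degree one is outside the scope of the triangular argument.
  rcases eq_or_ne k 1 with rfl | hk
  · refine ⟨X, monic_X, natDegree_X, ?_⟩
    rw [betaPolyOp, extendMonomials_X, betaImage_one hn, betaEigenvalue_one hn, one_smul]
  refine exists_monic_eigenvector_of_triangular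
    (natDegree_extendMonomials_le natDegree_betaImage_le) (fun p => ?_)
    fun j hj => betaEigenvalue_ne hn hj hk
  rw [coeff_extendMonomials_natDegree natDegree_betaImage_le, coeff_betaImage_self hn]

end BetaOperator

/-- For every `n ≥ 1` and `k ≥ 0` there is a monic eigenpolynomial of degree `k`
of the Beta operator with eigenvalue `η_k^{(n)} = (n-1)!·n^k/(n+k-1)!`. -/
theorem betaOp_eigenpolynomial (n : ℕ) (hn : 1 ≤ n) (k : ℕ) :
    ∃ q : Polynomial ℝ, q.Monic ∧ q.natDegree = k ∧
      ∀ x ∈ Set.Icc (0:ℝ) 1,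
        betaOp n (fun t => q.eval t) x =
          ((Nat.factorial (n - 1) : ℝ) * (n : ℝ) ^ k / (Nat.factorial (n + k - 1) : ℝ))
            * q.eval x := by
  obtain ⟨q, hmonic, hdeg, hq⟩ := exists_monic_betaPolyOp_eigenvector hn k
  refine ⟨q, hmonic, hdeg, fun x hx => ?_⟩
  rw [betaOp_eval_eq_eval_betaPolyOp hn q hx, hq, eval_smul, smul_eq_mul,
    betaEigenvalue_eq_factorial hn]
end

section
/- Fix k ≥ 2 and for each n ≥ 1 let q^{(n)} be a monic real polynomial of degree k satisfying 𝔅̄ₙ q^{(n)}(x) = η_k^{(n)} q^{(n)}(x) for all x ∈ [0,1], where η_k^{(n)} = (n−1)!·n^k/(n+k−1)!. Then for each j with 0 ≤ j ≤ k, the coefficient of x^j in q^{(n)} converges as n → ∞ to a*(k,j) = ∏_{l=1}^{k−j} ((k+1−l)(k−l)) / (l(l−2k+1)) (empty product equal to 1 for j = k). -/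
open MeasureTheory Finset Polynomial Filter

/-!
On monomials the Beta operator acts by
`𝔅ₙ(tʲ)(x) = B(nx + j, n(1 - x)) / B(nx, n(1 - x)) = ∏_{i<j} (nx + i)/(n + i)`,
a polynomial of degree `j` whose coefficients satisfy
`cⱼ(m) = [m = j] + C(j,2) ([m + 1 = j] - [m = j]) / n + o(1/n)`.
The eigenvalue `η = (n-1)! nᵏ / (n+k-1)!` is the leading coefficient `cₖ(k)`, so comparing the
coefficients of `xᵐ` in `𝔅ₙ q = η q` gives `(cₖ(k) - cₘ(m)) qₘ = ∑_{m<j≤k} qⱼ cⱼ(m)`.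
Multiplying by `n` and letting `n → ∞` yields `(C(m,2) - C(k,2)) a*(k,m) = C(m+1,2) a*(k,m+1)`,
which, starting from `a*(k,k) = 1`, is solved by the product formula.
-/
namespace ProbabilityTheory

lemma betaIntegral_ofReal (a b : ℝ) :
    Complex.betaIntegral a b = ((∫ t in (0:ℝ)..1, t ^ (a - 1) * (1 - t) ^ (b - 1) : ℝ) : ℂ) := by
  rw [Complex.betaIntegral, ← intervalIntegral.integral_ofReal]
  refine intervalIntegral.integral_congr fun t ht => ?_
  rw [Set.uIcc_of_le zero_le_one] at ht
  simp only [Complex.ofReal_mul, Complex.ofReal_cpow ht.1, Complex.ofReal_cpow (sub_nonneg.2 ht.2)]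
  push_cast
  rfl

lemma intervalIntegrable_rpow_mul_one_sub_rpow {a b : ℝ} (ha : 0 < a) (hb : 0 < b) :
    IntervalIntegrable (fun t : ℝ => t ^ (a - 1) * (1 - t) ^ (b - 1)) volume 0 1 := by
  have h := Complex.betaIntegral_convergent (u := a) (v := b) (by simpa) (by simpa)
  refine (intervalIntegrable_iff.2 (intervalIntegrable_iff.1 h).re).congr fun t ht => ?_
  rw [Set.uIoc_of_le zero_le_one] at ht
  simp [← Complex.ofReal_cpow ht.1.le, ← Complex.ofReal_cpow (sub_nonneg.2 ht.2),
    ← Complex.ofReal_one, ← Complex.ofReal_sub]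

lemma integral_rpow_mul_one_sub_rpow {a b : ℝ} (ha : 0 < a) (hb : 0 < b) :
    ∫ t in (0:ℝ)..1, t ^ (a - 1) * (1 - t) ^ (b - 1) = beta a b := by
  rw [beta_eq_betaIntegralReal a b ha hb, betaIntegral_ofReal, Complex.ofReal_re]

lemma beta_add_one_left {a b : ℝ} (ha : 0 < a) (hb : 0 < b) :
    beta (a + 1) b = a / (a + b) * beta a b := by
  have hab : a + b ≠ 0 := by positivity
  have hΓ : Real.Gamma (a + b) ≠ 0 := (Real.Gamma_pos_of_pos (by positivity)).ne'
  rw [beta, beta, Real.Gamma_add_one ha.ne', add_right_comm, Real.Gamma_add_one hab]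
  field_simp

lemma beta_add_nat_left {a b : ℝ} (ha : 0 < a) (hb : 0 < b) (j : ℕ) :
    beta (a + j) b = (∏ i ∈ range j, (a + i) / (a + b + i)) * beta a b := by
  induction j with
  | zero => simp
  | succ j ih =>
    rw [Nat.cast_succ, ← add_assoc, beta_add_one_left (by positivity) hb, ih, prod_range_succ]
    ring

lemma integral_rpow_mul_one_sub_rpow_mul_pow {a b : ℝ} (ha : 0 < a) (hb : 0 < b) (j : ℕ) :
    ∫ t in (0:ℝ)..1, t ^ (a - 1) * (1 - t) ^ (b - 1) * t ^ j = beta (a + j) b := by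
  rw [← integral_rpow_mul_one_sub_rpow (by positivity) hb]
  refine intervalIntegral.integral_congr_ae (Eventually.of_forall fun t ht => ?_)
  rw [Set.uIoc_of_le zero_le_one] at ht
  rw [add_sub_right_comm, Real.rpow_add_natCast ht.1.ne']
  ring

end ProbabilityTheory

open ProbabilityTheory

lemma integral_rpow_mul_one_sub_rpow_mul_eval {a b : ℝ} (ha : 0 < a) (hb : 0 < b) (p : ℝ[X]) :
    ∫ t in (0:ℝ)..1, t ^ (a - 1) * (1 - t) ^ (b - 1) * p.eval t =
      ∑ j ∈ range (p.natDegree + 1), p.coeff j * beta (a + j) b := by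
  have hw := intervalIntegrable_rpow_mul_one_sub_rpow ha hb
  have hsum : ∀ t : ℝ, t ^ (a - 1) * (1 - t) ^ (b - 1) * p.eval t =
      ∑ j ∈ range (p.natDegree + 1), p.coeff j * (t ^ (a - 1) * (1 - t) ^ (b - 1) * t ^ j) := by
    intro t
    rw [eval_eq_sum_range, mul_sum]
    exact sum_congr rfl fun j _ => by ring
  simp_rw [hsum]
  rw [intervalIntegral.integral_finsetSum fun j _ =>
    (hw.mul_continuousOn (continuous_pow j).continuousOn).const_mul _]
  simp_rw [intervalIntegral.integral_const_mul, integral_rpow_mul_one_sub_rpow_mul_pow ha hb]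

/-- The polynomial `𝔅ₙ(tʲ)`. -/
noncomputable def betaMonomial (n j : ℕ) : ℝ[X] :=
  ∏ i ∈ range j, (C ((n : ℝ) / (n + i)) * X + C ((i : ℝ) / (n + i)))

lemma eval_betaMonomial (n j : ℕ) (x : ℝ) :
    (betaMonomial n j).eval x = ∏ i ∈ range j, ((n : ℝ) * x + i) / (n + i) := by
  simp only [betaMonomial, eval_prod, eval_add, eval_mul, eval_C, eval_X, div_mul_eq_mul_div,
    ← add_div]

lemma betaOp_eval_eq_sum {n : ℕ} (hn : 0 < n) (p : ℝ[X]) {x : ℝ} (hx : x ∈ Set.Ioo (0:ℝ) 1) :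
    betaOp n (fun t => p.eval t) x =
      ∑ j ∈ range (p.natDegree + 1), p.coeff j * (betaMonomial n j).eval x := by
  have ha : 0 < (n : ℝ) * x := mul_pos (Nat.cast_pos.2 hn) hx.1
  have hb : 0 < (n : ℝ) * (1 - x) := mul_pos (Nat.cast_pos.2 hn) (sub_pos.2 hx.2)
  rw [betaOp, if_neg hx.1.ne', if_neg hx.2.ne, integral_rpow_mul_one_sub_rpow_mul_eval ha hb,
    integral_rpow_mul_one_sub_rpow ha hb, sum_div]
  refine sum_congr rfl fun j _ => ?_
  rw [beta_add_nat_left ha hb, eval_betaMonomial, show (n : ℝ) * x + n * (1 - x) = n by ring]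
  field_simp [(beta_pos ha hb).ne']

lemma Polynomial.coeff_mul_C_mul_X_add_C_succ {R : Type*} [CommSemiring R] (p : R[X]) (a b : R)
    (m : ℕ) : (p * (C a * X + C b)).coeff (m + 1) = a * p.coeff m + b * p.coeff (m + 1) := by
  rw [mul_add, coeff_add, coeff_mul_C, ← mul_assoc, coeff_mul_X, coeff_mul_C]
  ring

lemma Polynomial.coeff_mul_C_mul_X_add_C_zero {R : Type*} [CommSemiring R] (p : R[X]) (a b : R) :
    (p * (C a * X + C b)).coeff 0 = b * p.coeff 0 := by
  rw [mul_add, coeff_add, coeff_mul_C, ← mul_assoc, coeff_mul_X_zero]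
  ring

lemma betaMonomial_succ (n j : ℕ) :
    betaMonomial n (j + 1) =
      betaMonomial n j * (C ((n : ℝ) / (n + j)) * X + C ((j : ℝ) / (n + j))) :=
  prod_range_succ _ _

lemma natDegree_betaMonomial_le (n j : ℕ) : (betaMonomial n j).natDegree ≤ j := by
  induction j with
  | zero => simp [betaMonomial]
  | succ j ih =>
    rw [betaMonomial_succ]
    exact natDegree_mul_le.trans (add_le_add ih natDegree_linear_le)

lemma coeff_betaMonomial_of_lt (n : ℕ) {j m : ℕ} (h : j < m) : (betaMonomial n j).coeff m = 0 :=
  coeff_eq_zero_of_natDegree_lt ((natDegree_betaMonomial_le n j).trans_lt h)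

lemma coeff_betaMonomial_self (n j : ℕ) :
    (betaMonomial n j).coeff j = ∏ i ∈ range j, (n : ℝ) / (n + i) := by
  induction j with
  | zero => simp [betaMonomial]
  | succ j ih =>
    rw [betaMonomial_succ, coeff_mul_C_mul_X_add_C_succ, ih,
      coeff_betaMonomial_of_lt n j.lt_succ_self, prod_range_succ]
    ring

lemma sum_coeff_mul_coeff_betaMonomial {n : ℕ} (hn : 0 < n) {p : ℝ[X]} {E : ℝ}
    (hp : ∀ x ∈ Set.Ioo (0:ℝ) 1, betaOp n (fun t => p.eval t) x = E * p.eval x) (m : ℕ) :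
    ∑ j ∈ range (p.natDegree + 1), p.coeff j * (betaMonomial n j).coeff m = E * p.coeff m := by
  set F := ∑ j ∈ range (p.natDegree + 1), C (p.coeff j) * betaMonomial n j
  have hF : F = C E * p := by
    refine eq_of_infinite_eval_eq _ _ ((Set.Ioo_infinite zero_lt_one).mono fun x hx => ?_)
    simpa [F, eval_finsetSum, ← betaOp_eval_eq_sum hn p hx] using hp x hx
  simpa [F, finsetSum_coeff] using congrArg (coeff · m) hF

lemma sub_coeff_betaMonomial_mul_coeff {n : ℕ} (hn : 0 < n) {p : ℝ[X]} {E : ℝ}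
    (hp : ∀ x ∈ Set.Ioo (0:ℝ) 1, betaOp n (fun t => p.eval t) x = E * p.eval x)
    {m : ℕ} (hm : m ≤ p.natDegree) :
    (E - (betaMonomial n m).coeff m) * p.coeff m =
      ∑ j ∈ Ioc m p.natDegree, p.coeff j * (betaMonomial n j).coeff m := by
  have h := sum_coeff_mul_coeff_betaMonomial hn hp m
  rw [← sum_range_add_sum_Ico _ (by omega : m ≤ p.natDegree + 1), Ico_add_one_right_eq_Icc,
    ← sum_Ioc_add_eq_sum_Icc hm, sum_eq_zero fun j hj => by
      rw [coeff_betaMonomial_of_lt n (mem_range.1 hj), mul_zero]] at h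
  linarith

lemma tendsto_natCast_mul_coeff_betaMonomial_sub (j m : ℕ) :
    Tendsto (fun n : ℕ => (n : ℝ) * ((betaMonomial n j).coeff m - if m = j then 1 else 0)) atTop
      (nhds ((j.choose 2 : ℝ) * ((if m + 1 = j then 1 else 0) - if m = j then 1 else 0))) := by
  induction j generalizing m with
  | zero => simp [betaMonomial, coeff_one, eq_comm]
  | succ j ih =>
    have hfrac := tendsto_natCast_div_add_atTop (j : ℝ)
    have hc : ∀ m, Tendsto (fun n : ℕ => (betaMonomial n j).coeff m) atTop
        (nhds (if m = j then 1 else 0)) := by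
      intro m
      have h := ((ih m).mul tendsto_inv_atTop_nhds_zero_nat).add_const (if m = j then (1:ℝ) else 0)
      rw [mul_zero, zero_add] at h
      refine h.congr' ?_
      filter_upwards [eventually_ne_atTop 0] with n hn
      field_simp
      ring
    have hn : ∀ᶠ n : ℕ in atTop, (n : ℝ) + j ≠ 0 := by
      filter_upwards [eventually_ne_atTop 0] with n hn
      positivity
    cases m with
    | zero =>
      have h := (tendsto_const_nhds (x := (j : ℝ))).mul (hfrac.mul (hc 0))
      convert h.congr' ?_ using 2
      · rcases j with _ | j <;> simp
      · filter_upwards [hn] with n hn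
        rw [betaMonomial_succ, coeff_mul_C_mul_X_add_C_zero, if_neg (Nat.succ_ne_zero j).symm]
        field_simp
        ring
    | succ m =>
      have h := (hfrac.mul (ih m)).add
        (((tendsto_const_nhds (x := (j : ℝ))).mul hfrac).mul ((hc (m + 1)).sub_const
          (if m = j then 1 else 0)))
      convert h.congr' ?_ using 2
      · simp only [add_left_inj, Nat.choose_succ_succ', Nat.choose_one_right]
        push_cast
        ring
      · filter_upwards [hn] with n hn
        simp only [betaMonomial_succ, coeff_mul_C_mul_X_add_C_succ, add_left_inj]
        field_simp
        ring

lemma tendsto_natCast_mul_coeff_betaMonomial_self_sub_self (k m : ℕ) :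
    Tendsto (fun n : ℕ => (n : ℝ) * ((betaMonomial n k).coeff k - (betaMonomial n m).coeff m))
      atTop (nhds (m.choose 2 - k.choose 2)) := by
  convert (tendsto_natCast_mul_coeff_betaMonomial_sub k k).sub
    (tendsto_natCast_mul_coeff_betaMonomial_sub m m) using 2
  · simp only [↓reduceIte]
    ring
  · simp only [Nat.add_eq_left, one_ne_zero, ↓reduceIte]
    ring

lemma tendsto_natCast_mul_coeff_betaMonomial_of_lt {j m : ℕ} (h : m < j) :
    Tendsto (fun n : ℕ => (n : ℝ) * (betaMonomial n j).coeff m) atTop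
      (nhds ((j.choose 2 : ℝ) * if m + 1 = j then 1 else 0)) := by
  simpa [h.ne] using tendsto_natCast_mul_coeff_betaMonomial_sub j m

lemma coeff_betaMonomial_self_eq_factorial {n : ℕ} (hn : 0 < n) (k : ℕ) :
    (betaMonomial n k).coeff k = ((n - 1).factorial : ℝ) * (n : ℝ) ^ k / (n + k - 1).factorial := by
  rw [coeff_betaMonomial_self, ← Nat.factorial_mul_ascFactorial' n k hn,
    Nat.ascFactorial_eq_prod_range, prod_div_distrib, prod_const, card_range]
  have : ((n - 1).factorial : ℝ) ≠ 0 := by positivity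
  push_cast
  field_simp

lemma tendsto_coeff_of_tendsto_coeff_Ioc {k m : ℕ} (hk : 2 ≤ k) (hmk : m < k)
    {q : ℕ → ℝ[X]} {a : ℕ → ℝ}
    (hq : ∀ᶠ n in atTop, (q n).natDegree = k ∧ ∀ x ∈ Set.Ioo (0:ℝ) 1,
      betaOp n (fun t => (q n).eval t) x = (betaMonomial n k).coeff k * (q n).eval x)
    (ha : ∀ j ∈ Ioc m k, Tendsto (fun n => (q n).coeff j) atTop (nhds (a j))) :
    Tendsto (fun n => (q n).coeff m) atTop
      (nhds (a (m + 1) * (m + 1).choose 2 / (m.choose 2 - k.choose 2))) := by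
  have hD := tendsto_natCast_mul_coeff_betaMonomial_self_sub_self k m
  have hD0 : (m.choose 2 : ℝ) - k.choose 2 ≠ 0 := by
    have hmk' : (m : ℝ) + 1 ≤ k := by exact_mod_cast hmk
    have hk' : (2 : ℝ) ≤ k := by exact_mod_cast hk
    rw [Nat.cast_choose_two, Nat.cast_choose_two]
    nlinarith [(Nat.cast_nonneg m : (0 : ℝ) ≤ m)]
  have hS : Tendsto (fun n : ℕ => ∑ j ∈ Ioc m k, (q n).coeff j * (n * (betaMonomial n j).coeff m))
      atTop (nhds (a (m + 1) * (m + 1).choose 2)) := by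
    have h := tendsto_finsetSum (Ioc m k) fun j hj => (ha j hj).mul
      (tendsto_natCast_mul_coeff_betaMonomial_of_lt (mem_Ioc.1 hj).1)
    rwa [sum_eq_single_of_mem (m + 1) (mem_Ioc.2 ⟨m.lt_succ_self, hmk⟩) fun j _ hj => by
      simp [hj.symm], if_pos rfl, mul_one] at h
  refine (hS.div hD hD0).congr' ?_
  filter_upwards [hq, hD.eventually_ne hD0, eventually_gt_atTop 0] with n ⟨hdeg, heig⟩ hDn hn
  have h := sub_coeff_betaMonomial_mul_coeff hn heig (hdeg ▸ hmk.le)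
  rw [hdeg] at h
  rw [Pi.div_apply, div_eq_iff hDn]
  calc ∑ j ∈ Ioc m k, (q n).coeff j * (n * (betaMonomial n j).coeff m)
      = n * ∑ j ∈ Ioc m k, (q n).coeff j * (betaMonomial n j).coeff m := by
        rw [mul_sum]
        exact sum_congr rfl fun j _ => by ring
    _ = (q n).coeff m * (n * ((betaMonomial n k).coeff k - (betaMonomial n m).coeff m)) := by
        rw [← h]
        ring

/-- The limit `a*(k,j)`. -/
noncomputable def eigenCoeffLimit (k j : ℕ) : ℝ :=
  ∏ l ∈ Finset.Icc 1 (k - j),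
    (((k : ℝ) + 1 - l) * ((k : ℝ) - l)) / ((l : ℝ) * ((l : ℝ) - 2 * k + 1))

lemma eigenCoeffLimit_self (k : ℕ) : eigenCoeffLimit k k = 1 := by
  simp [eigenCoeffLimit]

lemma eigenCoeffLimit_of_lt {k m : ℕ} (h : m < k) :
    eigenCoeffLimit k m =
      eigenCoeffLimit k (m + 1) * (m + 1).choose 2 / (m.choose 2 - k.choose 2) := by
  rw [eigenCoeffLimit, eigenCoeffLimit, show k - m = k - (m + 1) + 1 by omega,
    prod_Icc_succ_top (by omega), show k - (m + 1) + 1 = k - m by omega, Nat.cast_sub h.le,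
    mul_div_assoc _ (((m + 1).choose 2 : ℕ) : ℝ)]
  congr 1
  rw [Nat.cast_choose_two, Nat.cast_choose_two, Nat.cast_choose_two, ← sub_div,
    div_div_div_cancel_right₀ two_ne_zero]
  congr 1 <;> push_cast <;> ring

/-- The coefficients of the monic eigenpolynomials of degree `k` of the Beta operators
converge, as `n → ∞`, to `a*(k,j) = ∏_{l=1}^{k-j} ((k+1-l)(k-l))/(l(l-2k+1))`. -/
theorem betaOp_eigenpolynomial_coeff_limit (k : ℕ) (hk : 2 ≤ k)
    (q : ℕ → Polynomial ℝ)
    (hq : ∀ n : ℕ, 1 ≤ n → (q n).Monic ∧ (q n).natDegree = k ∧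
      ∀ x ∈ Set.Icc (0:ℝ) 1,
        betaOp n (fun t => (q n).eval t) x =
          ((Nat.factorial (n - 1) : ℝ) * (n : ℝ) ^ k / (Nat.factorial (n + k - 1) : ℝ))
            * (q n).eval x) :
    ∀ j : ℕ, j ≤ k →
      Tendsto (fun n : ℕ => (q n).coeff j) atTop
        (nhds (∏ l ∈ Finset.Icc 1 (k - j),
          (((k : ℝ) + 1 - l) * ((k : ℝ) - l)) / ((l : ℝ) * ((l : ℝ) - 2 * k + 1)))) := by
  have hq' : ∀ᶠ n in atTop, (q n).Monic ∧ (q n).natDegree = k ∧ ∀ x ∈ Set.Ioo (0:ℝ) 1,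
      betaOp n (fun t => (q n).eval t) x = (betaMonomial n k).coeff k * (q n).eval x := by
    filter_upwards [eventually_ge_atTop 1] with n hn
    obtain ⟨hmonic, hdeg, heig⟩ := hq n hn
    rw [coeff_betaMonomial_self_eq_factorial hn]
    exact ⟨hmonic, hdeg, fun x hx => heig x (Set.Ioo_subset_Icc_self hx)⟩
  refine Nat.strong_decreasing_induction ⟨k, fun m hm hmk => absurd hmk hm.not_ge⟩
    fun m ih hmk => ?_
  rcases hmk.lt_or_eq with hlt | rfl
  · rw [← eigenCoeffLimit, eigenCoeffLimit_of_lt hlt]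
    exact tendsto_coeff_of_tendsto_coeff_Ioc hk hlt (hq'.mono fun n hn => hn.2)
      fun j hj => ih j (mem_Ioc.1 hj).1 (mem_Ioc.1 hj).2
  · rw [← eigenCoeffLimit, eigenCoeffLimit_self]
    refine tendsto_const_nhds.congr' (hq'.mono fun n hn => ?_)
    dsimp only
    rw [← hn.2.1, hn.1.coeff_natDegree]
end
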